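/- For compact Hausdorff topological spaces P and Q, there is a homeomorphism C(P) × C(Q) ≅ C(P ⋆ Q) between the product of the open cones on P and Q and the open cone on the join of P and Q. -/

import Mathlib

/-
The map `C(P ⋆ Q) → C(P) × C(Q)`, `[[p, u, q], r] ↦ ([p, r(1 - u)], [q, r u])`, splits the
radius `r` according to the join coordinate `u`; it is a continuous bijection, with inverse
`([p, s], [q, t]) ↦ [[p, t / (s + t), q], s + t]`. It is also closed: cones over Hausdorff
spaces are Hausdorff, and near a point with radii `(s, t)` every preimage point has total
radius below `s + t + 2`, so it lies in a compact piece `P × [0,1] × Q × [0, s + t + 2]` of the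
source. A closed continuous bijection is a homeomorphism.
-/

/-- The relation generating the quotient `(Z × [0,∞)) / ∼` with `(z,0) ∼ (z',0)`. -/
def ConeRel (Z : Type) (a b : Z × {t : ℝ // 0 ≤ t}) : Prop :=
  (a.2 : ℝ) = 0 ∧ (b.2 : ℝ) = 0

/-- The open cone `(Z × [0,∞)) / ∼` collapsing `Z × {0}` to a point. -/
def Cone (Z : Type) [TopologicalSpace Z] : Type := Quot (ConeRel Z)

instance (Z : Type) [TopologicalSpace Z] : TopologicalSpace (Cone Z) :=
  inferInstanceAs (TopologicalSpace (Quot (ConeRel Z)))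

/-- The relation generating the join: `(p,0,q) ∼ (p,0,q')` and `(p,1,q) ∼ (p',1,q)`. -/
def JoinRel (P Q : Type) (a b : P × (Set.Icc (0:ℝ) 1) × Q) : Prop :=
  ((a.2.1 : ℝ) = 0 ∧ (b.2.1 : ℝ) = 0 ∧ a.1 = b.1) ∨
  ((a.2.1 : ℝ) = 1 ∧ (b.2.1 : ℝ) = 1 ∧ a.2.2 = b.2.2)

/-- The join `P ⋆ Q`, the quotient of `P × [0,1] × Q` by the join relation. -/
def Join (P Q : Type) [TopologicalSpace P] [TopologicalSpace Q] : Type :=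
  Quot (JoinRel P Q)

instance (P Q : Type) [TopologicalSpace P] [TopologicalSpace Q] :
    TopologicalSpace (Join P Q) :=
  inferInstanceAs (TopologicalSpace (Quot (JoinRel P Q)))

open Set Topology

theorem isClosedMap_of_forall_exists_preimage_subset_isCompact {X Y : Type*}
    [TopologicalSpace X] [TopologicalSpace Y] [T2Space Y] {f : X → Y} (hf : Continuous f)
    (h : ∀ y, ∃ U, IsOpen U ∧ y ∈ U ∧ ∃ K, IsCompact K ∧ f ⁻¹' U ⊆ K) : IsClosedMap f := by
  intro C hC
  refine isClosed_of_closure_subset fun y hy => ?_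
  obtain ⟨U, hU, hyU, K, hK, hUK⟩ := h y
  have hy' : y ∈ closure (U ∩ f '' C) := hU.inter_closure ⟨hyU, hy⟩
  have hsub : U ∩ f '' C ⊆ f '' (C ∩ K) := by
    rintro _ ⟨hxU, x, hxC, rfl⟩
    exact ⟨x, ⟨hxC, hUK hxU⟩, rfl⟩
  have hclosed : IsClosed (f '' (C ∩ K)) := ((hK.inter_left hC).image hf).isClosed
  exact image_mono inter_subset_left (hclosed.closure_subset_iff.2 hsub hy')

instance : LocallyCompactSpace {t : ℝ // 0 ≤ t} :=
  inferInstanceAs (LocallyCompactSpace NNReal)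

namespace Cone

variable {Z : Type}

theorem mk_eq_mk_of_val_eq {z : Z} {s t : {t : ℝ // 0 ≤ t}} (h : (s : ℝ) = t) :
    Quot.mk (ConeRel Z) (z, s) = Quot.mk (ConeRel Z) (z, t) := by
  rw [Subtype.ext h]

variable [TopologicalSpace Z]

def radius : Cone Z → ℝ :=
  Quot.lift (fun x => (x.2 : ℝ)) fun _ _ h => h.1.trans h.2.symm

theorem continuous_radius : Continuous (radius : Cone Z → ℝ) :=
  continuous_quot_lift _ (continuous_subtype_val.comp continuous_snd)

/-- The points `[z, t]` with `z ∈ U` and `t > 0`, written as a lift so that its preimage in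
`Z × [0,∞)` is `U × (0,∞)` on the nose. -/
def overPositive (U : Set Z) : Set (Cone Z) :=
  {x | Quot.lift (fun a : Z × {t : ℝ // 0 ≤ t} => a.1 ∈ U ∧ 0 < (a.2 : ℝ))
    (fun _ _ h => propext ⟨fun ha => (ha.2.ne' h.1).elim, fun hb => (hb.2.ne' h.2).elim⟩) x}

theorem isOpen_overPositive {U : Set Z} (hU : IsOpen U) : IsOpen (overPositive U) :=
  isOpen_coinduced.2 <| hU.prod ((isOpen_Ioi (a := (0 : ℝ))).preimage continuous_subtype_val)

instance [T2Space Z] : T2Space (Cone Z) := by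
  refine ⟨fun x y hxy => ?_⟩
  induction x using Quot.ind with | _ a => ?_
  induction y using Quot.ind with | _ b => ?_
  by_cases hr : (a.2 : ℝ) = b.2
  · by_cases ha : (a.2 : ℝ) = 0
    · exact (hxy (Quot.sound ⟨ha, hr ▸ ha⟩)).elim
    · have hz : a.1 ≠ b.1 := fun h => hxy (by rw [Prod.ext h (Subtype.ext hr)])
      obtain ⟨U, V, hU, hV, haU, hbV, hUV⟩ := t2_separation hz
      have hapos : (0 : ℝ) < a.2 := lt_of_le_of_ne a.2.2 (Ne.symm ha)
      refine ⟨_, _, isOpen_overPositive hU, isOpen_overPositive hV, ⟨haU, hapos⟩,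
        ⟨hbV, hr ▸ hapos⟩, disjoint_left.2 fun c hcU hcV => ?_⟩
      induction c using Quot.ind with | _ c => exact hUV.ne_of_mem hcU.1 hcV.1 rfl
  · exact separated_by_continuous continuous_radius hr

end Cone

section JoinCone

variable (P Q : Type) [TopologicalSpace P] [TopologicalSpace Q]

def splitRadius : (P × Icc (0 : ℝ) 1 × Q) × {t : ℝ // 0 ≤ t} → Cone P × Cone Q :=
  fun x =>
    (Quot.mk _ (x.1.1, ⟨x.2 * (1 - x.1.2.1), mul_nonneg x.2.2 (sub_nonneg.2 x.1.2.1.2.2)⟩),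
     Quot.mk _ (x.1.2.2, ⟨x.2 * x.1.2.1, mul_nonneg x.2.2 x.1.2.1.2.1⟩))

theorem continuous_splitRadius : Continuous (splitRadius P Q) := by
  unfold splitRadius
  fun_prop

theorem splitRadius_eq_of_joinRel (r : {t : ℝ // 0 ≤ t}) {a b : P × Icc (0 : ℝ) 1 × Q}
    (hab : JoinRel P Q a b) : splitRadius P Q (a, r) = splitRadius P Q (b, r) := by
  obtain ⟨p, u, q⟩ := a
  obtain ⟨p', u', q'⟩ := b
  rcases hab with ⟨hu : (u : ℝ) = 0, hu' : (u' : ℝ) = 0, rfl : p = p'⟩ |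
    ⟨hu : (u : ℝ) = 1, hu' : (u' : ℝ) = 1, rfl : q = q'⟩
  · exact Prod.ext (Cone.mk_eq_mk_of_val_eq (by simp [hu, hu']))
      (Quot.sound ⟨by simp [hu], by simp [hu']⟩)
  · exact Prod.ext (Quot.sound ⟨by simp [hu], by simp [hu']⟩)
      (Cone.mk_eq_mk_of_val_eq (by simp [hu, hu']))

def joinToProd : Cone (Join P Q) → Cone P × Cone Q :=
  Quot.lift
    (fun jr : Join P Q × {t : ℝ // 0 ≤ t} =>
      Quot.lift (fun x => splitRadius P Q (x, jr.2))
        (fun _ _ h => splitRadius_eq_of_joinRel P Q jr.2 h) jr.1)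
    (by
      rintro ⟨j, r⟩ ⟨j', r'⟩ ⟨hr : (r : ℝ) = 0, hr' : (r' : ℝ) = 0⟩
      induction j using Quot.ind
      induction j' using Quot.ind
      exact Prod.ext (Quot.sound ⟨by simp [hr], by simp [hr']⟩)
        (Quot.sound ⟨by simp [hr], by simp [hr']⟩))

theorem continuous_joinToProd : Continuous (joinToProd P Q) :=
  continuous_quot_lift _ <|
    isQuotientMap_quot_mk.continuous_lift_prod_left (continuous_splitRadius P Q)

/-- The join coordinate `t / (s + t)` of the pair of radii `(s, t)`; when `s = t = 0` its junk
value `0` is harmless because the total radius `s + t` vanishes. -/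
noncomputable def joinWeight (s t : {t : ℝ // 0 ≤ t}) : Icc (0 : ℝ) 1 :=
  ⟨t / (s + t), div_nonneg t.2 (add_nonneg s.2 t.2),
    div_le_one_of_le₀ (le_add_of_nonneg_left s.2) (add_nonneg s.2 t.2)⟩

variable {P Q} in
noncomputable def prodToJoin : Cone P × Cone Q → Cone (Join P Q) := fun x =>
  Quot.lift₂
    (fun (a : P × {t : ℝ // 0 ≤ t}) (b : Q × {t : ℝ // 0 ≤ t}) =>
      Quot.mk _ (Quot.mk _ (a.1, joinWeight a.2 b.2, b.1), ⟨a.2 + b.2, add_nonneg a.2.2 b.2.2⟩))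
    (by
      rintro ⟨p, s⟩ ⟨q, t⟩ ⟨q', t'⟩ ⟨ht : (t : ℝ) = 0, ht' : (t' : ℝ) = 0⟩
      have hjoin : (Quot.mk (JoinRel P Q) (p, joinWeight s t, q) : Join P Q) =
          Quot.mk _ (p, joinWeight s t', q') :=
        Quot.sound (Or.inl ⟨by simp [joinWeight, ht], by simp [joinWeight, ht'], rfl⟩)
      simp only [hjoin]
      exact Cone.mk_eq_mk_of_val_eq (by simp [ht, ht']))
    (by
      rintro ⟨p, s⟩ ⟨p', s'⟩ ⟨q, t⟩ ⟨hs : (s : ℝ) = 0, hs' : (s' : ℝ) = 0⟩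
      by_cases ht : (t : ℝ) = 0
      · exact Quot.sound ⟨by simp [hs, ht], by simp [hs', ht]⟩
      · have hjoin : (Quot.mk (JoinRel P Q) (p, joinWeight s t, q) : Join P Q) =
            Quot.mk _ (p', joinWeight s' t, q) :=
          Quot.sound (Or.inr ⟨by simp [joinWeight, hs, ht], by simp [joinWeight, hs', ht], rfl⟩)
        simp only [hjoin]
        exact Cone.mk_eq_mk_of_val_eq (by simp [hs, hs']))
    x.1 x.2

noncomputable def joinEquivProd : Cone (Join P Q) ≃ Cone P × Cone Q where
  toFun := joinToProd P Q
  invFun := prodToJoin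
  left_inv := by
    rintro ⟨j, r⟩
    induction j using Quot.ind with | _ x => ?_
    obtain ⟨p, u, q⟩ := x
    show Quot.mk _ (Quot.mk _ (p, joinWeight _ _, q), _) = _
    by_cases hr : (r : ℝ) = 0
    · exact Quot.sound ⟨by simp [hr], hr⟩
    · rw [show joinWeight _ _ = u from Subtype.ext (by simp only [joinWeight]; field_simp; ring)]
      exact Cone.mk_eq_mk_of_val_eq (by ring)
  right_inv := by
    rintro ⟨x, y⟩
    induction x using Quot.ind with | _ a => ?_
    induction y using Quot.ind with | _ b => ?_
    obtain ⟨p, s⟩ := a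
    obtain ⟨q, t⟩ := b
    show (Quot.mk _ _, Quot.mk _ _) = _
    by_cases hst : (s : ℝ) + t = 0
    · have hs : (s : ℝ) = 0 := by linarith [s.2, t.2]
      have ht : (t : ℝ) = 0 := by linarith [s.2, t.2]
      exact Prod.ext (Quot.sound ⟨by simp [hs, ht], hs⟩) (Quot.sound ⟨by simp [hs, ht], ht⟩)
    · refine Prod.ext (Cone.mk_eq_mk_of_val_eq ?_) (Cone.mk_eq_mk_of_val_eq ?_)
      · simp only [joinWeight]
        field_simp
        ring
      · simp only [joinWeight]
        field_simp

variable [CompactSpace P] [T2Space P] [CompactSpace Q] [T2Space Q]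

theorem isClosedMap_splitRadius : IsClosedMap (splitRadius P Q) := by
  refine isClosedMap_of_forall_exists_preimage_subset_isCompact (continuous_splitRadius P Q)
    fun y => ?_
  set s := Cone.radius y.1
  set t := Cone.radius y.2
  refine ⟨{z | Cone.radius z.1 < s + 1 ∧ Cone.radius z.2 < t + 1}, ?_,
    ⟨lt_add_one s, lt_add_one t⟩, univ ×ˢ (Subtype.val ⁻¹' Icc 0 (s + t + 2)), ?_, ?_⟩
  · exact (isOpen_lt (Cone.continuous_radius.comp continuous_fst) continuous_const).inter
      (isOpen_lt (Cone.continuous_radius.comp continuous_snd) continuous_const)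
  · exact isCompact_univ.prod
      ((isClosed_Ici.isClosedEmbedding_subtypeVal).isCompact_preimage isCompact_Icc)
  · rintro ⟨⟨p, u, q⟩, r⟩ ⟨hs : (r : ℝ) * (1 - u) < s + 1, ht : (r : ℝ) * u < t + 1⟩
    exact ⟨trivial, r.2, by linarith⟩

theorem isClosedMap_joinToProd : IsClosedMap (joinToProd P Q) := by
  refine IsClosedMap.of_comp_surjective
    (f := fun x : (P × Icc (0 : ℝ) 1 × Q) × {t : ℝ // 0 ≤ t} =>
      (Quot.mk _ (Quot.mk _ x.1, x.2) : Cone (Join P Q))) ?_ ?_ (isClosedMap_splitRadius P Q)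
  · rintro ⟨j, r⟩
    induction j using Quot.ind with | _ x => exact ⟨(x, r), rfl⟩
  · fun_prop

end JoinCone

/-- For compact Hausdorff `P` and `Q`, there is a homeomorphism
`C(P) × C(Q) ≅ C(P ⋆ Q)`. -/
theorem stmt2 (P Q : Type) [TopologicalSpace P] [TopologicalSpace Q]
    [CompactSpace P] [T2Space P] [CompactSpace Q] [T2Space Q] :
    Nonempty ((Cone P × Cone Q) ≃ₜ Cone (Join P Q)) :=
  ⟨((joinEquivProd P Q).toHomeomorphOfContinuousClosed (continuous_joinToProd P Q)
    (isClosedMap_joinToProd P Q)).symm⟩
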